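/- arXiv:1403.0800 — 2 statements merged into one kernel-verified Lean document; each statement's English description precedes it below -/
import Mathlib

section
/- Let T, P, A be strings over an alphabet such that there is no branching between P and P·A in T, and suppose there is no string B with |B| < |A| such that P·B is a suffix of T. Then for every position i at which P occurs in T, we have i + |P| + |A| ≤ |T| and P·A occurs at position i in T. Consequently, the rightmost occurrence position of P in T equals the rightmost occurrence position of P·A in T. -/
/-- `S` occurs at position `i` in `T`. -/
def OccursAt {α : Type*} (S T : List α) (i : ℕ) : Prop :=
  i + S.length ≤ T.length ∧ S <+: T.drop i

/-- `S` is an infix (substring) of `T`: it occurs at some position. -/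
def IsInfixOf {α : Type*} (S T : List α) : Prop :=
  ∃ i, OccursAt S T i

/-- `S` is a suffix of `T`: it occurs at position `|T| - |S|`. -/
def IsSuffixOf {α : Type*} (S T : List α) : Prop :=
  OccursAt S T (T.length - S.length)

/-- The rightmost occurrence position of `S` in `T`. -/
noncomputable def rightmost {α : Type*} (S T : List α) : ℕ :=
  sSup {i | OccursAt S T i}

/-- There is no branching between `P` and `P ++ A` in `T`. -/
def NoBranching {α : Type*} (T P A : List α) : Prop :=
  IsInfixOf (P ++ A) T ∧
    ∀ k ≤ A.length, ∀ C C' : List α, C.length = k → C'.length = k →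
      IsInfixOf (P ++ C) T → IsInfixOf (P ++ C') T → C = C'

/-!
If fewer than `|A|` characters followed an occurrence of `P` at position `i`, then `P`
followed by the rest of `T` would be a suffix `P·B` of `T` with `|B| < |A|`. So at least `|A|`
characters follow every occurrence, and since nothing branches between `P` and `P·A`,
they spell `A`.
-/

section

variable {α : Type*}

theorem isSuffixOf_drop (T : List α) (i : ℕ) : IsSuffixOf (T.drop i) T := by
  unfold IsSuffixOf OccursAt
  rw [List.length_drop, show T.length - (T.length - i) = min i T.length by omega]
  refine ⟨by omega, ?_⟩
  rw [← List.drop_eq_drop_min]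

namespace OccursAt

variable {S U T : List α} {i : ℕ}

theorem of_append (h : OccursAt (S ++ U) T i) : OccursAt S T i :=
  ⟨(Nat.add_le_add_left (by simp) i).trans h.1, (List.prefix_append S U).trans h.2⟩

theorem drop_eq_append (h : OccursAt S T i) : T.drop i = S ++ T.drop (i + S.length) := by
  rw [← List.drop_drop, List.prefix_iff_eq_append.mp h.2]

theorem append_take_drop (h : OccursAt S T i) (n : ℕ) :
    OccursAt (S ++ (T.drop (i + S.length)).take n) T i := by
  have hlen := h.1
  refine ⟨by simp only [List.length_append, List.length_take, List.length_drop]; omega, ?_⟩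
  rw [h.drop_eq_append]
  exact (List.prefix_append_right_inj S).mpr (List.take_prefix n _)

theorem add_length_le_of_no_short_suffix {n : ℕ} (h : OccursAt S T i)
    (hno : ¬ ∃ B : List α, B.length < n ∧ IsSuffixOf (S ++ B) T) :
    i + S.length + n ≤ T.length := by
  by_contra hlt
  refine hno ⟨T.drop (i + S.length), by rw [List.length_drop]; have := h.1; omega, ?_⟩
  rw [← h.drop_eq_append]
  exact isSuffixOf_drop T i

end OccursAt

theorem NoBranching.occursAt_append {T P A : List α} {i : ℕ} (h : NoBranching T P A)
    (hP : OccursAt P T i) (hlen : i + P.length + A.length ≤ T.length) :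
    OccursAt (P ++ A) T i := by
  have hC := hP.append_take_drop A.length
  have hCA : (T.drop (i + P.length)).take A.length = A :=
    h.2 A.length le_rfl _ _ (by rw [List.length_take, List.length_drop]; omega) rfl ⟨i, hC⟩ h.1
  rwa [hCA] at hC

end

/-- Case 1 of Lemma 1: without an intervening implicit suffix, every occurrence
of P extends to an occurrence of P·A, and the rightmost positions coincide. -/
theorem rightmost_eq_of_no_short_suffix {α : Type*} (T P A : List α)
    (h : NoBranching T P A)
    (hno : ¬ ∃ B : List α, B.length < A.length ∧ IsSuffixOf (P ++ B) T) :
    (∀ i, OccursAt P T i →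
        i + P.length + A.length ≤ T.length ∧ OccursAt (P ++ A) T i) ∧
      rightmost P T = rightmost (P ++ A) T := by
  have extend : ∀ i, OccursAt P T i →
      i + P.length + A.length ≤ T.length ∧ OccursAt (P ++ A) T i := fun i hP =>
    have hlen := hP.add_length_le_of_no_short_suffix hno
    ⟨hlen, h.occursAt_append hP hlen⟩
  refine ⟨extend, congrArg sSup (Set.ext fun i => ?_)⟩
  exact ⟨fun hP => (extend i hP).2, OccursAt.of_append⟩
end

section
/- Let T be a string, a a character, and S a string that is an infix of T. If S is a suffix of T ++ [a], then the rightmost occurrence position of S in T ++ [a] equals |T| + 1 − |S|; otherwise, the rightmost occurrence position of S in T ++ [a] equals the rightmost occurrence position of S in T. -/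
theorem OccursAt.add_length_le {α : Type*} {S T : List α} {i : ℕ} (h : OccursAt S T i) :
    i + S.length ≤ T.length :=
  h.1

theorem occursAt_append_iff {α : Type*} {S T : List α} (U : List α) {i : ℕ}
    (hi : i + S.length ≤ T.length) :
    OccursAt S (T ++ U) i ↔ OccursAt S T i := by
  have hS : S.length ≤ (T.drop i).length := by rw [List.length_drop]; omega
  rw [OccursAt, OccursAt, List.drop_append_of_le_length (by omega),
    List.isPrefix_append_of_length hS, List.length_append]
  exact and_congr_left fun _ => iff_of_true (by omega) hi

theorem rightmost_eq_of_isSuffixOf {α : Type*} {S T : List α} (h : IsSuffixOf S T) :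
    rightmost S T = T.length - S.length :=
  IsGreatest.csSup_eq ⟨h, fun i hi => by have := hi.add_length_le; omega⟩

theorem occursAt_snoc_iff_of_not_isSuffixOf {α : Type*} {S T : List α} {a : α}
    (h : ¬ IsSuffixOf S (T ++ [a])) (i : ℕ) :
    OccursAt S (T ++ [a]) i ↔ OccursAt S T i := by
  refine ⟨fun hi => ?_, fun hi => (occursAt_append_iff [a] hi.add_length_le).2 hi⟩
  -- an occurrence in `T ++ [a]` other than the suffix one ends inside `T`
  have hlt : i + S.length ≤ T.length := by
    have hle := hi.add_length_le
    have hne : i ≠ (T ++ [a]).length - S.length := fun he => h (by rwa [he] at hi)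
    simp only [List.length_append, List.length_singleton] at hle hne
    omega
  exact (occursAt_append_iff [a] hlt).1 hi

theorem rightmost_snoc_general {α : Type*} (T : List α) (a : α) (S : List α) :
    (IsSuffixOf S (T ++ [a]) →
        rightmost S (T ++ [a]) = T.length + 1 - S.length) ∧
      (¬ IsSuffixOf S (T ++ [a]) →
        rightmost S (T ++ [a]) = rightmost S T) := by
  refine ⟨fun hsuf => ?_, fun hsuf => ?_⟩
  · rw [rightmost_eq_of_isSuffixOf hsuf, List.length_append, List.length_singleton]
  · exact congrArg sSup (Set.ext (occursAt_snoc_iff_of_not_isSuffixOf hsuf))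

/-- Correctness of naive position updating: appending a character changes the
rightmost occurrence position exactly for suffixes of the extended text. -/
theorem rightmost_snoc {α : Type*} (T : List α) (a : α) (S : List α)
    (hS : IsInfixOf S T) :
    (IsSuffixOf S (T ++ [a]) →
        rightmost S (T ++ [a]) = T.length + 1 - S.length) ∧
      (¬ IsSuffixOf S (T ++ [a]) →
        rightmost S (T ++ [a]) = rightmost S T) :=
  rightmost_snoc_general T a S
end
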